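/- Let ξ¹ : ℝ → ℝ (function of x), ξ³ : ℝ → ℝ (function of t), and ξ² : ℝ² → ℝ (function of (y,t)) be smooth; let η, α³³, α¹¹, α²², β¹, β² : ℝ⁴ → ℝ be smooth functions of (x,y,t,u). For (x,y,t,u,v₁,v₂,v₃,f,g) ∈ ℝ⁹ define μ¹ = (α³³ + 2ξ³'(t) + η_u − ξ¹'(x))f + α¹¹ v₁ + β¹, μ² = (α³³ + 2ξ³'(t) + η_u − ξ²_y)g + 2ξ²_t v₃ + α²² v₂ + β², and ζ₃ = η_t + ξ²_t v₂ + (η_u + ξ³'(t))v₃. If the identity ∂_x μ¹ + v₁ ∂_u μ¹ + ∂_y μ² + v₂ ∂_u μ² − ∂_t ζ₃ − v₃ ∂_u ζ₃ = 0 holds for all real values of (x,y,t,u,v₁,v₂,v₃,f,g), then η_uu = 0 everywhere and there exist smooth functions λ : ℝ² → ℝ and γ : ℝ³ → ℝ such that η(x,y,t,u) = (ξ²_y(y,t) − ½ξ³'(t) + λ(x,y))u + γ(x,y,t). In particular, η depends at most affinely on u. -/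

import Mathlib

/- STATEMENT 4: the determining condition ℋ = 0 for the family
f(x,y,t,u,u_x)_x + g(x,y,t,u,u_x,u_y,u_t)_y = u_tt (case ∂f/∂u_t = ∂f/∂u_y = 0,
h = 0) forces η_uu = 0, with η = (ξ²_y − ½ξ³' + λ(x,y))u + γ(x,y,t). -/

noncomputable section

/-- Partial derivative with respect to the first variable (x) of a function on ℝ⁴. -/
def pd1 (f : ℝ × ℝ × ℝ × ℝ → ℝ) (p : ℝ × ℝ × ℝ × ℝ) : ℝ :=
  deriv (fun s => f (s, p.2.1, p.2.2.1, p.2.2.2)) p.1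

/-- Partial derivative with respect to the second variable (y). -/
def pd2 (f : ℝ × ℝ × ℝ × ℝ → ℝ) (p : ℝ × ℝ × ℝ × ℝ) : ℝ :=
  deriv (fun s => f (p.1, s, p.2.2.1, p.2.2.2)) p.2.1

/-- Partial derivative with respect to the third variable (t). -/
def pd3 (f : ℝ × ℝ × ℝ × ℝ → ℝ) (p : ℝ × ℝ × ℝ × ℝ) : ℝ :=
  deriv (fun s => f (p.1, p.2.1, s, p.2.2.2)) p.2.2.1

/-- Partial derivative with respect to the fourth variable (u). -/
def pd4 (f : ℝ × ℝ × ℝ × ℝ → ℝ) (p : ℝ × ℝ × ℝ × ℝ) : ℝ :=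
  deriv (fun s => f (p.1, p.2.1, p.2.2.1, s)) p.2.2.2

/-- Partial derivative with respect to the first variable of a function on ℝ². -/
def qd1 (f : ℝ × ℝ → ℝ) (q : ℝ × ℝ) : ℝ := deriv (fun s => f (s, q.2)) q.1

/-- Partial derivative with respect to the second variable of a function on ℝ². -/
def qd2 (f : ℝ × ℝ → ℝ) (q : ℝ × ℝ) : ℝ := deriv (fun s => f (q.1, s)) q.2

/-- μ¹ = (α³³ + 2ξ³'(t) + η_u − ξ¹'(x))f + α¹¹v₁ + β¹, as a function of p = (x,y,t,u). -/
def μ1 (ξ1 ξ3 : ℝ → ℝ) (η α33 α11 β1 : ℝ × ℝ × ℝ × ℝ → ℝ)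
    (v1 f : ℝ) (p : ℝ × ℝ × ℝ × ℝ) : ℝ :=
  (α33 p + 2 * deriv ξ3 p.2.2.1 + pd4 η p - deriv ξ1 p.1) * f + α11 p * v1 + β1 p

/-- μ² = (α³³ + 2ξ³'(t) + η_u − ξ²_y)g + 2ξ²_t v₃ + α²²v₂ + β², with ξ² = ξ²(y,t). -/
def μ2 (ξ3 : ℝ → ℝ) (ξ2 : ℝ × ℝ → ℝ) (η α33 α22 β2 : ℝ × ℝ × ℝ × ℝ → ℝ)
    (v2 v3 g : ℝ) (p : ℝ × ℝ × ℝ × ℝ) : ℝ :=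
  (α33 p + 2 * deriv ξ3 p.2.2.1 + pd4 η p - qd1 ξ2 (p.2.1, p.2.2.1)) * g
    + 2 * qd2 ξ2 (p.2.1, p.2.2.1) * v3 + α22 p * v2 + β2 p

/-- ζ₃ = η_t + ξ²_t v₂ + (η_u + ξ³'(t))v₃. -/
def ζ3 (ξ3 : ℝ → ℝ) (ξ2 : ℝ × ℝ → ℝ) (η : ℝ × ℝ × ℝ × ℝ → ℝ)
    (v2 v3 : ℝ) (p : ℝ × ℝ × ℝ × ℝ) : ℝ :=
  pd3 η p + qd2 ξ2 (p.2.1, p.2.2.1) * v2 + (pd4 η p + deriv ξ3 p.2.2.1) * v3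

-- ===== helpers (verified) =====
abbrev E4 := ℝ × ℝ × ℝ × ℝ
abbrev E2 := ℝ × ℝ

lemma diffSlice1 {g : E4 → ℝ} (hg : ContDiff ℝ (⊤ : ℕ∞) g) (y t u : ℝ) :
    Differentiable ℝ (fun s => g (s, y, t, u)) :=
  (hg.comp ((ContDiff.prodMk contDiff_id contDiff_const))).differentiable (by simp)
lemma diffSlice2 {g : E4 → ℝ} (hg : ContDiff ℝ (⊤ : ℕ∞) g) (x t u : ℝ) :
    Differentiable ℝ (fun s => g (x, s, t, u)) :=
  (hg.comp ((ContDiff.prodMk contDiff_const ((ContDiff.prodMk contDiff_id contDiff_const))))).differentiable (by simp)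
lemma diffSlice3 {g : E4 → ℝ} (hg : ContDiff ℝ (⊤ : ℕ∞) g) (x y u : ℝ) :
    Differentiable ℝ (fun s => g (x, y, s, u)) :=
  (hg.comp ((ContDiff.prodMk contDiff_const ((ContDiff.prodMk contDiff_const ((ContDiff.prodMk contDiff_id contDiff_const))))))).differentiable (by simp)
lemma diffSlice4 {g : E4 → ℝ} (hg : ContDiff ℝ (⊤ : ℕ∞) g) (x y t : ℝ) :
    Differentiable ℝ (fun s => g (x, y, t, s)) :=
  (hg.comp ((ContDiff.prodMk contDiff_const ((ContDiff.prodMk contDiff_const ((ContDiff.prodMk contDiff_const contDiff_id))))))).differentiable (by simp)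
lemma qdiffSlice1 {g : E2 → ℝ} (hg : ContDiff ℝ (⊤ : ℕ∞) g) (t : ℝ) :
    Differentiable ℝ (fun s => g (s, t)) :=
  (hg.comp ((ContDiff.prodMk contDiff_id contDiff_const))).differentiable (by simp)
lemma qdiffSlice2 {g : E2 → ℝ} (hg : ContDiff ℝ (⊤ : ℕ∞) g) (y : ℝ) :
    Differentiable ℝ (fun s => g (y, s)) :=
  (hg.comp ((ContDiff.prodMk contDiff_const contDiff_id))).differentiable (by simp)

lemma pd1_eq {f : E4 → ℝ} (hf : Differentiable ℝ f) (p : E4) :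
    pd1 f p = fderiv ℝ f p (1, 0, 0, 0) := by
  obtain ⟨x, y, t, u⟩ := p
  exact (((hf _).hasFDerivAt).comp_hasDerivAt x
    ((HasDerivAt.prodMk (hasDerivAt_id x) ((HasDerivAt.prodMk (hasDerivAt_const x y)
      ((HasDerivAt.prodMk (hasDerivAt_const x t) (hasDerivAt_const x u)))))))).deriv
lemma pd2_eq {f : E4 → ℝ} (hf : Differentiable ℝ f) (p : E4) :
    pd2 f p = fderiv ℝ f p (0, 1, 0, 0) := by
  obtain ⟨x, y, t, u⟩ := p
  exact (((hf _).hasFDerivAt).comp_hasDerivAt y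
    ((HasDerivAt.prodMk (hasDerivAt_const y x) ((HasDerivAt.prodMk (hasDerivAt_id y)
      ((HasDerivAt.prodMk (hasDerivAt_const y t) (hasDerivAt_const y u)))))))).deriv
lemma pd3_eq {f : E4 → ℝ} (hf : Differentiable ℝ f) (p : E4) :
    pd3 f p = fderiv ℝ f p (0, 0, 1, 0) := by
  obtain ⟨x, y, t, u⟩ := p
  exact (((hf _).hasFDerivAt).comp_hasDerivAt t
    ((HasDerivAt.prodMk (hasDerivAt_const t x) ((HasDerivAt.prodMk (hasDerivAt_const t y)
      ((HasDerivAt.prodMk (hasDerivAt_id t) (hasDerivAt_const t u)))))))).deriv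
lemma pd4_eq {f : E4 → ℝ} (hf : Differentiable ℝ f) (p : E4) :
    pd4 f p = fderiv ℝ f p (0, 0, 0, 1) := by
  obtain ⟨x, y, t, u⟩ := p
  exact (((hf _).hasFDerivAt).comp_hasDerivAt u
    ((HasDerivAt.prodMk (hasDerivAt_const u x) ((HasDerivAt.prodMk (hasDerivAt_const u y)
      ((HasDerivAt.prodMk (hasDerivAt_const u t) (hasDerivAt_id u)))))))).deriv
lemma qd1_eq {f : E2 → ℝ} (hf : Differentiable ℝ f) (q : E2) :
    qd1 f q = fderiv ℝ f q (1, 0) := by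
  obtain ⟨y, t⟩ := q
  exact (((hf _).hasFDerivAt).comp_hasDerivAt y
    ((HasDerivAt.prodMk (hasDerivAt_id y) (hasDerivAt_const y t)))).deriv
lemma qd2_eq {f : E2 → ℝ} (hf : Differentiable ℝ f) (q : E2) :
    qd2 f q = fderiv ℝ f q (0, 1) := by
  obtain ⟨y, t⟩ := q
  exact (((hf _).hasFDerivAt).comp_hasDerivAt t
    ((HasDerivAt.prodMk (hasDerivAt_const t y) (hasDerivAt_id t)))).deriv

lemma fderiv_apply_contDiff {E : Type*} [NormedAddCommGroup E] [NormedSpace ℝ E]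
    {f : E → ℝ} (hf : ContDiff ℝ (⊤ : ℕ∞) f) (v : E) :
    ContDiff ℝ (⊤ : ℕ∞) (fun p => fderiv ℝ f p v) :=
  (hf.fderiv_right (by simp)).clm_apply contDiff_const

lemma pd1_contDiff {f : E4 → ℝ} (hf : ContDiff ℝ (⊤ : ℕ∞) f) : ContDiff ℝ (⊤ : ℕ∞) (pd1 f) := by
  have : pd1 f = fun p => fderiv ℝ f p (1,0,0,0) :=
    funext (pd1_eq (hf.differentiable (by simp)))
  rw [this]; exact fderiv_apply_contDiff hf _
lemma pd2_contDiff {f : E4 → ℝ} (hf : ContDiff ℝ (⊤ : ℕ∞) f) : ContDiff ℝ (⊤ : ℕ∞) (pd2 f) := by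
  have : pd2 f = fun p => fderiv ℝ f p (0,1,0,0) :=
    funext (pd2_eq (hf.differentiable (by simp)))
  rw [this]; exact fderiv_apply_contDiff hf _
lemma pd3_contDiff {f : E4 → ℝ} (hf : ContDiff ℝ (⊤ : ℕ∞) f) : ContDiff ℝ (⊤ : ℕ∞) (pd3 f) := by
  have : pd3 f = fun p => fderiv ℝ f p (0,0,1,0) :=
    funext (pd3_eq (hf.differentiable (by simp)))
  rw [this]; exact fderiv_apply_contDiff hf _
lemma pd4_contDiff {f : E4 → ℝ} (hf : ContDiff ℝ (⊤ : ℕ∞) f) : ContDiff ℝ (⊤ : ℕ∞) (pd4 f) := by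
  have : pd4 f = fun p => fderiv ℝ f p (0,0,0,1) :=
    funext (pd4_eq (hf.differentiable (by simp)))
  rw [this]; exact fderiv_apply_contDiff hf _
lemma qd1_contDiff {f : E2 → ℝ} (hf : ContDiff ℝ (⊤ : ℕ∞) f) : ContDiff ℝ (⊤ : ℕ∞) (qd1 f) := by
  have : qd1 f = fun p => fderiv ℝ f p (1,0) :=
    funext (qd1_eq (hf.differentiable (by simp)))
  rw [this]; exact fderiv_apply_contDiff hf _
lemma qd2_contDiff {f : E2 → ℝ} (hf : ContDiff ℝ (⊤ : ℕ∞) f) : ContDiff ℝ (⊤ : ℕ∞) (qd2 f) := by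
  have : qd2 f = fun p => fderiv ℝ f p (0,1) :=
    funext (qd2_eq (hf.differentiable (by simp)))
  rw [this]; exact fderiv_apply_contDiff hf _

lemma deriv_contDiff {f : ℝ → ℝ} (hf : ContDiff ℝ (⊤ : ℕ∞) f) : ContDiff ℝ (⊤ : ℕ∞) (deriv f) := by
  have : deriv f = fun x => fderiv ℝ f x 1 := funext fun x => fderiv_apply_one_eq_deriv.symm
  rw [this]; exact fderiv_apply_contDiff hf _

lemma fderiv2 {E : Type*} [NormedAddCommGroup E] [NormedSpace ℝ E]
    {f : E → ℝ} (hf : ContDiff ℝ (⊤ : ℕ∞) f) (p v w : E) :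
    fderiv ℝ (fun q => fderiv ℝ f q w) p v = fderiv ℝ (fderiv ℝ f) p v w := by
  have h := fderiv_clm_apply (c := fderiv ℝ f) (u := fun _ : E => w)
    ((hf.fderiv_right (m := (⊤ : ℕ∞)) (by simp)).differentiable (by simp) p) (differentiableAt_const w)
  have h2 : (fun q => fderiv ℝ f q w) = fun q => (fderiv ℝ f q) ((fun _ : E => w) q) := rfl
  rw [h2, h]
  simp

lemma second_symm {E : Type*} [NormedAddCommGroup E] [NormedSpace ℝ E]
    {f : E → ℝ} (hf : ContDiff ℝ (⊤ : ℕ∞) f) (p v w : E) :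
    fderiv ℝ (fderiv ℝ f) p v w = fderiv ℝ (fderiv ℝ f) p w v :=
  second_derivative_symmetric (fun q => ((hf.differentiable (by simp)) q).hasFDerivAt)
    (((hf.fderiv_right (m := (⊤ : ℕ∞)) (by simp)).differentiable (by simp) p).hasFDerivAt) v w

lemma pd34_symm {f : E4 → ℝ} (hf : ContDiff ℝ (⊤ : ℕ∞) f) (p : E4) :
    pd3 (pd4 f) p = pd4 (pd3 f) p := by
  have h4 : pd4 f = fun q => fderiv ℝ f q (0,0,0,1) :=
    funext (pd4_eq (hf.differentiable (by simp)))
  have h3 : pd3 f = fun q => fderiv ℝ f q (0,0,1,0) :=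
    funext (pd3_eq (hf.differentiable (by simp)))
  rw [pd3_eq ((pd4_contDiff hf).differentiable (by simp)),
      pd4_eq ((pd3_contDiff hf).differentiable (by simp)), h4, h3,
      fderiv2 hf, fderiv2 hf]
  exact second_symm hf p _ _

lemma qd12_symm {f : E2 → ℝ} (hf : ContDiff ℝ (⊤ : ℕ∞) f) (q : E2) :
    qd2 (qd1 f) q = qd1 (qd2 f) q := by
  have h1 : qd1 f = fun r => fderiv ℝ f r (1,0) :=
    funext (qd1_eq (hf.differentiable (by simp)))
  have h2 : qd2 f = fun r => fderiv ℝ f r (0,1) :=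
    funext (qd2_eq (hf.differentiable (by simp)))
  rw [qd2_eq ((qd1_contDiff hf).differentiable (by simp)),
      qd1_eq ((qd2_contDiff hf).differentiable (by simp)), h1, h2,
      fderiv2 hf, fderiv2 hf]
  exact second_symm hf q _ _


theorem stmt_4
    (ξ1 ξ3 : ℝ → ℝ) (ξ2 : ℝ × ℝ → ℝ) (η α33 α11 α22 β1 β2 : ℝ × ℝ × ℝ × ℝ → ℝ)
    (hξ1 : ContDiff ℝ (⊤ : ℕ∞) ξ1) (hξ3 : ContDiff ℝ (⊤ : ℕ∞) ξ3) (hξ2 : ContDiff ℝ (⊤ : ℕ∞) ξ2)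
    (hη : ContDiff ℝ (⊤ : ℕ∞) η) (hα33 : ContDiff ℝ (⊤ : ℕ∞) α33) (hα11 : ContDiff ℝ (⊤ : ℕ∞) α11)
    (hα22 : ContDiff ℝ (⊤ : ℕ∞) α22) (hβ1 : ContDiff ℝ (⊤ : ℕ∞) β1) (hβ2 : ContDiff ℝ (⊤ : ℕ∞) β2)
    -- ℋ = 0 : ∂ₓμ¹ + v₁∂ᵤμ¹ + ∂_yμ² + v₂∂ᵤμ² − ∂ₜζ₃ − v₃∂ᵤζ₃ = 0 identically
    (hH : ∀ (p : ℝ × ℝ × ℝ × ℝ) (v1 v2 v3 f g : ℝ),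
      pd1 (μ1 ξ1 ξ3 η α33 α11 β1 v1 f) p
        + v1 * pd4 (μ1 ξ1 ξ3 η α33 α11 β1 v1 f) p
        + pd2 (μ2 ξ3 ξ2 η α33 α22 β2 v2 v3 g) p
        + v2 * pd4 (μ2 ξ3 ξ2 η α33 α22 β2 v2 v3 g) p
        - pd3 (ζ3 ξ3 ξ2 η v2 v3) p
        - v3 * pd4 (ζ3 ξ3 ξ2 η v2 v3) p = 0) :
    (∀ p : ℝ × ℝ × ℝ × ℝ, pd4 (pd4 η) p = 0) ∧
    ∃ lam : ℝ × ℝ → ℝ, ∃ γ : ℝ × ℝ × ℝ → ℝ, ContDiff ℝ (⊤ : ℕ∞) lam ∧ ContDiff ℝ (⊤ : ℕ∞) γ ∧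
      ∀ x y t u : ℝ,
        η (x, y, t, u) =
          (qd1 ξ2 (y, t) - (1 / 2) * deriv ξ3 t + lam (x, y)) * u + γ (x, y, t) := by
  -- the key polynomial identity in v3
  have key : ∀ (x y t u v3 : ℝ),
      pd1 β1 (x,y,t,u) + (2 * qd1 (qd2 ξ2) (y,t) * v3 + pd2 β2 (x,y,t,u))
        - (pd3 (pd3 η) (x,y,t,u) + (pd3 (pd4 η) (x,y,t,u) + deriv (deriv ξ3) t) * v3)
        - v3 * (pd4 (pd3 η) (x,y,t,u) + pd4 (pd4 η) (x,y,t,u) * v3) = 0 := by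
    intro x y t u v3
    have H := hH (x,y,t,u) 0 0 v3 0 0
    have e1 : pd1 (μ1 ξ1 ξ3 η α33 α11 β1 0 0) (x,y,t,u) = pd1 β1 (x,y,t,u) := by
      simp [pd1, μ1]
    have e2 : pd2 (μ2 ξ3 ξ2 η α33 α22 β2 0 v3 0) (x,y,t,u)
        = 2 * qd1 (qd2 ξ2) (y,t) * v3 + pd2 β2 (x,y,t,u) := by
      have hA : HasDerivAt (fun s => qd2 ξ2 (s,t)) (qd1 (qd2 ξ2) (y,t)) y :=
        (qdiffSlice1 (qd2_contDiff hξ2) t y).hasDerivAt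
      have hB : HasDerivAt (fun s => β2 (x,s,t,u)) (pd2 β2 (x,y,t,u)) y :=
        (diffSlice2 hβ2 x t u y).hasDerivAt
      have h := (((hA.const_mul 2).mul_const v3).add hB).deriv
      rw [← h]
      simp [pd2, μ2]
      rfl
    have e3 : pd3 (ζ3 ξ3 ξ2 η 0 v3) (x,y,t,u)
        = pd3 (pd3 η) (x,y,t,u) + (pd3 (pd4 η) (x,y,t,u) + deriv (deriv ξ3) t) * v3 := by
      have hC : HasDerivAt (fun s => pd3 η (x,y,s,u)) (pd3 (pd3 η) (x,y,t,u)) t :=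
        (diffSlice3 (pd3_contDiff hη) x y u t).hasDerivAt
      have hD : HasDerivAt (fun s => pd4 η (x,y,s,u)) (pd3 (pd4 η) (x,y,t,u)) t :=
        (diffSlice3 (pd4_contDiff hη) x y u t).hasDerivAt
      have hE : HasDerivAt (deriv ξ3) (deriv (deriv ξ3) t) t :=
        (((deriv_contDiff hξ3).differentiable (by simp)) t).hasDerivAt
      have h := (hC.add ((hD.add hE).mul_const v3)).deriv
      rw [← h]
      simp [pd3, ζ3]
      rfl
    have e4 : pd4 (ζ3 ξ3 ξ2 η 0 v3) (x,y,t,u)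
        = pd4 (pd3 η) (x,y,t,u) + pd4 (pd4 η) (x,y,t,u) * v3 := by
      have hF : HasDerivAt (fun s => pd3 η (x,y,t,s)) (pd4 (pd3 η) (x,y,t,u)) u :=
        (diffSlice4 (pd3_contDiff hη) x y t u).hasDerivAt
      have hG : HasDerivAt (fun s => pd4 η (x,y,t,s)) (pd4 (pd4 η) (x,y,t,u)) u :=
        (diffSlice4 (pd4_contDiff hη) x y t u).hasDerivAt
      have h := (hF.add ((hG.add_const (deriv ξ3 t)).mul_const v3)).deriv
      rw [← h]
      simp [pd4, ζ3]
      rfl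
    rw [e1, e2, e3, e4] at H
    linarith [H]
  -- quadratic coefficient: η_uu = 0
  have huu : ∀ p : E4, pd4 (pd4 η) p = 0 := by
    intro p
    obtain ⟨x, y, t, u⟩ := p
    have h0 := key x y t u 0
    have h1 := key x y t u 1
    have h2 := key x y t u (-1)
    nlinarith [h0, h1, h2]
  -- linear coefficient, with Clairaut, gives the mixed derivative
  have hmix : ∀ x y t u : ℝ,
      pd3 (pd4 η) (x,y,t,u) = qd1 (qd2 ξ2) (y,t) - (1/2) * deriv (deriv ξ3) t := by
    intro x y t u
    have h0 := key x y t u 0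
    have h1 := key x y t u 1
    have h2 := key x y t u (-1)
    have hs := pd34_symm hη (x,y,t,u)
    nlinarith [h0, h1, h2, hs]
  refine ⟨huu, ?_⟩
  -- define lam and γ
  refine ⟨fun q => pd4 η (q.1, q.2, 0, 0) - qd1 ξ2 (q.2, 0) + (1/2) * deriv ξ3 0,
          fun q => η (q.1, q.2.1, q.2.2, 0), ?_, ?_, ?_⟩
  · have h1 : ContDiff ℝ (⊤ : ℕ∞) (fun q : E2 => pd4 η (q.1, q.2, 0, 0)) :=
      (pd4_contDiff hη).comp
        ((ContDiff.prodMk contDiff_fst ((ContDiff.prodMk contDiff_snd ((ContDiff.prodMk contDiff_const contDiff_const))))))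
    have h2 : ContDiff ℝ (⊤ : ℕ∞) (fun q : E2 => qd1 ξ2 (q.2, 0)) :=
      (qd1_contDiff hξ2).comp ((ContDiff.prodMk contDiff_snd contDiff_const))
    exact (h1.sub h2).add contDiff_const
  · exact hη.comp ((ContDiff.prodMk contDiff_fst ((ContDiff.prodMk (contDiff_fst.comp contDiff_snd)
      ((ContDiff.prodMk (contDiff_snd.comp contDiff_snd) contDiff_const))))))
  · intro x y t u
    -- Step 1: pd4 η constant in u
    have const_u : ∀ u' : ℝ, pd4 η (x,y,t,u') = pd4 η (x,y,t,0) := by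
      intro u'
      exact is_const_of_deriv_eq_zero (diffSlice4 (pd4_contDiff hη) x y t)
        (fun s => huu (x,y,t,s)) u' 0
    -- Step 2: η affine in u
    have affine : η (x,y,t,u) = pd4 η (x,y,t,0) * u + η (x,y,t,0) := by
      set c := pd4 η (x,y,t,0) with hc
      have hφ : Differentiable ℝ (fun s => η (x,y,t,s) - c * s) :=
        (diffSlice4 hη x y t).sub (differentiable_id.const_mul c)
      have hφ' : ∀ s, deriv (fun s => η (x,y,t,s) - c * s) s = 0 := by
        intro s
        have hd : HasDerivAt (fun s => η (x,y,t,s) - c * s) (pd4 η (x,y,t,s) - c * 1) s :=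
          ((diffSlice4 hη x y t s).hasDerivAt).sub ((hasDerivAt_id s).const_mul c)
        rw [hd.deriv, const_u s]
        ring
      have := is_const_of_deriv_eq_zero hφ hφ' u 0
      simp at this
      linarith [this]
    -- Step 3: pd4 η (x,y,t,0) in terms of ξ2, ξ3, lam
    have step3 : pd4 η (x,y,t,0) - qd1 ξ2 (y,t) + (1/2) * deriv ξ3 t
        = pd4 η (x,y,0,0) - qd1 ξ2 (y,0) + (1/2) * deriv ξ3 0 := by
      have hψ : Differentiable ℝ
          (fun s => pd4 η (x,y,s,0) - qd1 ξ2 (y,s) + (1/2) * deriv ξ3 s) :=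
        ((diffSlice3 (pd4_contDiff hη) x y 0).sub
          (qdiffSlice2 (qd1_contDiff hξ2) y)).add
          (((deriv_contDiff hξ3).differentiable (by simp)).const_mul (1/2))
      have hψ' : ∀ s, deriv
          (fun s => pd4 η (x,y,s,0) - qd1 ξ2 (y,s) + (1/2) * deriv ξ3 s) s = 0 := by
        intro s
        have h1 : HasDerivAt (fun s => pd4 η (x,y,s,0)) (pd3 (pd4 η) (x,y,s,0)) s :=
          (diffSlice3 (pd4_contDiff hη) x y 0 s).hasDerivAt
        have h2 : HasDerivAt (fun s => qd1 ξ2 (y,s)) (qd2 (qd1 ξ2) (y,s)) s :=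
          (qdiffSlice2 (qd1_contDiff hξ2) y s).hasDerivAt
        have h3 : HasDerivAt (deriv ξ3) (deriv (deriv ξ3) s) s :=
          (((deriv_contDiff hξ3).differentiable (by simp)) s).hasDerivAt
        have hd := ((h1.sub h2).add (h3.const_mul (1/2))).deriv
        rw [show deriv (fun s => pd4 η (x,y,s,0) - qd1 ξ2 (y,s) + (1/2) * deriv ξ3 s) s = _ from hd, hmix x y s 0, qd12_symm hξ2 (y,s)]
        ring
      exact is_const_of_deriv_eq_zero hψ hψ' t 0
    have hc : pd4 η (x,y,t,0) = qd1 ξ2 (y,t) - (1/2) * deriv ξ3 t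
        + (pd4 η (x,y,0,0) - qd1 ξ2 (y,0) + (1/2) * deriv ξ3 0) := by linarith [step3]
    show η (x,y,t,u) = (qd1 ξ2 (y,t) - (1/2) * deriv ξ3 t
        + (pd4 η (x,y,0,0) - qd1 ξ2 (y,0) + (1/2) * deriv ξ3 0)) * u + η (x,y,t,0)
    rw [affine, hc]
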